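/- arXiv:1512.04063 — 3 statements merged into one kernel-verified Lean document; each statement's English description precedes it below -/
import Mathlib

section
/- Let $a \in \mathbb{R}$ and let $f$ be continuous on $[a-1/2, a+1/2]$ such that $f'$ exists and is strictly increasing on $(a-1/2, a)$ and on $(a, a+1/2)$, and $\lim_{x\to a^-} f'(x) \le \lim_{x\to a^+} f'(x)$ (both limits finite). Then $f(a) < \int_{a-1/2}^{a+1/2} f(x)\,dx$. -/
/-!
Being strictly increasing, `f'` stays strictly below its left limit `L₁` on `(a - 1/2, a)` and
strictly above its right limit `L₂ ≥ L₁` on `(a, a + 1/2)`. By the mean value theorem `f` then lies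
strictly above the line `x ↦ f a + L₁ (x - a)` away from `a`, and the integral of that line over an
interval of length `1` centred at `a` is `f a`.
-/

open Set Filter Topology

section

variable {α β : Type*} [LinearOrder α] [TopologicalSpace α] [OrderTopology α] [DenselyOrdered α]
  [Preorder β] [TopologicalSpace β] {f : α → β} {L : β} {a b x : α}

lemma StrictMonoOn.lt_of_tendsto_nhdsGT [ClosedIicTopology β] (hf : StrictMonoOn f (Ioo a b))
    (hL : Tendsto f (𝓝[>] a) (𝓝 L)) (hx : x ∈ Ioo a b) : L < f x := by
  obtain ⟨y, hay, hyx⟩ := exists_between hx.1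
  have hy : y ∈ Ioo a b := ⟨hay, hyx.trans hx.2⟩
  have : (𝓝[>] a).NeBot := nhdsGT_neBot_of_exists_gt ⟨y, hay⟩
  have hLy : L ≤ f y := le_of_tendsto hL <| by
    filter_upwards [Ioo_mem_nhdsGT hay] with t ht
    exact (hf ⟨ht.1, ht.2.trans hy.2⟩ hy ht.2).le
  exact hLy.trans_lt (hf hy hx hyx)

lemma StrictMonoOn.lt_of_tendsto_nhdsLT [ClosedIciTopology β] (hf : StrictMonoOn f (Ioo a b))
    (hL : Tendsto f (𝓝[<] b) (𝓝 L)) (hx : x ∈ Ioo a b) : f x < L := by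
  obtain ⟨y, hxy, hyb⟩ := exists_between hx.2
  have hy : y ∈ Ioo a b := ⟨hx.1.trans hxy, hyb⟩
  have : (𝓝[<] b).NeBot := nhdsLT_neBot_of_exists_lt ⟨y, hyb⟩
  have hLy : f y ≤ L := ge_of_tendsto hL <| by
    filter_upwards [Ioo_mem_nhdsLT hyb] with t ht
    exact (hf hy ⟨hy.1.trans ht.1, ht.2⟩ ht.1).le
  exact (hf hx hy hxy).trans_le hLy

end

lemma integral_add_mul_sub_center (a h c L : ℝ) :
    ∫ x in (a - h)..(a + h), (c + L * (x - a)) = 2 * h * c := by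
  have hlin : Continuous fun x : ℝ => L * (x - a) := by fun_prop
  rw [intervalIntegral.integral_add intervalIntegrable_const (hlin.intervalIntegrable _ _),
    intervalIntegral.integral_const_mul, intervalIntegral.integral_comp_sub_right (fun x => x)]
  simp only [intervalIntegral.integral_const, integral_id, smul_eq_mul]
  ring

section

variable {f f' : ℝ → ℝ} {a b C : ℝ}

lemma mul_sub_lt_sub_of_lt_hasDerivAt (hab : a < b) (hf : ContinuousOn f (Icc a b))
    (hd : ∀ x ∈ Ioo a b, HasDerivAt f (f' x) x) (hC : ∀ x ∈ Ioo a b, C < f' x) :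
    C * (b - a) < f b - f a := by
  obtain ⟨c, hc, hslope⟩ := exists_hasDerivAt_eq_slope f f' hab hf hd
  simpa only [hslope, lt_div_iff₀ (sub_pos.mpr hab)] using hC c hc

lemma sub_lt_mul_sub_of_hasDerivAt_lt (hab : a < b) (hf : ContinuousOn f (Icc a b))
    (hd : ∀ x ∈ Ioo a b, HasDerivAt f (f' x) x) (hC : ∀ x ∈ Ioo a b, f' x < C) :
    f b - f a < C * (b - a) := by
  obtain ⟨c, hc, hslope⟩ := exists_hasDerivAt_eq_slope f f' hab hf hd
  simpa only [hslope, div_lt_iff₀ (sub_pos.mpr hab)] using hC c hc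

lemma add_mul_sub_lt_of_hasDerivAt {c x : ℝ} (hc : c ∈ Icc a b) (hf : ContinuousOn f (Icc a b))
    (hd₁ : ∀ y ∈ Ioo a c, HasDerivAt f (f' y) y) (hd₂ : ∀ y ∈ Ioo c b, HasDerivAt f (f' y) y)
    (hC₁ : ∀ y ∈ Ioo a c, f' y < C) (hC₂ : ∀ y ∈ Ioo c b, C < f' y)
    (hx : x ∈ Icc a b) (hxc : x ≠ c) : f c + C * (x - c) < f x := by
  rcases hxc.lt_or_gt with hxc | hcx
  · have := sub_lt_mul_sub_of_hasDerivAt_lt hxc (hf.mono (Icc_subset_Icc hx.1 hc.2))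
      (fun y hy => hd₁ y ⟨hx.1.trans_lt hy.1, hy.2⟩) (fun y hy => hC₁ y ⟨hx.1.trans_lt hy.1, hy.2⟩)
    linarith
  · have := mul_sub_lt_sub_of_lt_hasDerivAt hcx (hf.mono (Icc_subset_Icc hc.1 hx.2))
      (fun y hy => hd₂ y ⟨hy.1, hy.2.trans_le hx.2⟩) (fun y hy => hC₂ y ⟨hy.1, hy.2.trans_le hx.2⟩)
    linarith

end

theorem stmt0 (a : ℝ) (f f' : ℝ → ℝ) (L₁ L₂ : ℝ)
    (hc : ContinuousOn f (Set.Icc (a - 1/2) (a + 1/2)))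
    (hd1 : ∀ x ∈ Set.Ioo (a - 1/2) a, HasDerivAt f (f' x) x)
    (hd2 : ∀ x ∈ Set.Ioo a (a + 1/2), HasDerivAt f (f' x) x)
    (hm1 : StrictMonoOn f' (Set.Ioo (a - 1/2) a))
    (hm2 : StrictMonoOn f' (Set.Ioo a (a + 1/2)))
    (hL1 : Filter.Tendsto f' (nhdsWithin a (Set.Iio a)) (nhds L₁))
    (hL2 : Filter.Tendsto f' (nhdsWithin a (Set.Ioi a)) (nhds L₂))
    (hLe : L₁ ≤ L₂) :
    f a < ∫ x in (a - 1/2)..(a + 1/2), f x := by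
  have ha : a ∈ Icc (a - 1/2) (a + 1/2) := ⟨by linarith, by linarith⟩
  have hb : a + 1/2 ∈ Icc (a - 1/2) (a + 1/2) := ⟨by linarith, le_rfl⟩
  have hsupport : ∀ x ∈ Icc (a - 1/2) (a + 1/2), x ≠ a → f a + L₁ * (x - a) < f x :=
    fun x hx hxa => add_mul_sub_lt_of_hasDerivAt ha hc hd1 hd2
      (fun _ => hm1.lt_of_tendsto_nhdsLT hL1)
      (fun y hy => hLe.trans_lt (hm2.lt_of_tendsto_nhdsGT hL2 hy)) hx hxa
  calc f a = ∫ x in (a - 1/2)..(a + 1/2), (f a + L₁ * (x - a)) := by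
        rw [integral_add_mul_sub_center]; ring
    _ < ∫ x in (a - 1/2)..(a + 1/2), f x := by
      refine intervalIntegral.integral_lt_integral_of_continuousOn_of_le_of_exists_lt
        (by linarith) (by fun_prop) hc (fun x hx => ?_) ⟨a + 1/2, hb, hsupport _ hb (by linarith)⟩
      rcases eq_or_ne x a with rfl | hxa
      · simp
      · exact (hsupport x (Ioc_subset_Icc_self hx) hxa).le
end

section
/- For $\rho > \max\{0, -\alpha\}$, $0 < \gamma < \sigma \le 1$, one has $\int_0^{\infty} \frac{\operatorname{csch}(\rho t^{\gamma})}{e^{\alpha t^{\gamma}}} t^{\sigma-1}\,dt = \frac{2\,\Gamma(\sigma/\gamma)}{\gamma (2\rho)^{\sigma/\gamma}}\, \zeta\!\left(\frac{\sigma}{\gamma}, \frac{\alpha+\rho}{2\rho}\right)$, and this value is a positive real number. -/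
/-- The hyperbolic cosecant function. -/
noncomputable def csch (u : ℝ) : ℝ := 2 / (Real.exp u - Real.exp (-u))

/-- The Hurwitz zeta function (real, as a series), for Re s > 1, a > 0. -/
noncomputable def hurwitzZetaReal (s a : ℝ) : ℝ := ∑' k : ℕ, ((k : ℝ) + a) ^ (-s)

/-!
Expand `csch x = ∑ₖ 2 e^{-(2k+1)x}`, so that after the substitution `u = t ^ γ` the integrand
becomes `u ^ (s - 1) ∑ₖ 2 e^{-2ρ(k + a)u}` with `s = σ / γ` and `a = (α + ρ) / (2ρ)`.
All terms are nonnegative and each integrates to `2 Γ(s) (2ρ(k + a))^{-s}`, which is summable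
because `s > 1`; integrating termwise gives the Hurwitz series.
-/

open Real MeasureTheory Set

theorem integral_comp_rpow_mul_rpow_sub_one (g : ℝ → ℝ) {γ : ℝ} (hγ : 0 < γ) (σ : ℝ) :
    ∫ t in Ioi 0, g (t ^ γ) * t ^ (σ - 1) = γ⁻¹ * ∫ u in Ioi 0, g u * u ^ (σ / γ - 1) := by
  rw [← integral_comp_rpow_Ioi_of_pos (g := fun u => g u * u ^ (σ / γ - 1)) hγ,
    ← integral_const_mul]
  refine setIntegral_congr_fun measurableSet_Ioi fun t (ht : 0 < t) => ?_
  have hexp : t ^ (γ - 1) * (t ^ γ) ^ (σ / γ - 1) = t ^ (σ - 1) := by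
    rw [← rpow_mul ht.le, ← rpow_add ht]
    congr 1
    field_simp
    ring
  rw [smul_eq_mul, ← hexp]
  field_simp

theorem hasSum_csch {x : ℝ} (hx : 0 < x) :
    HasSum (fun k : ℕ => 2 * exp (-((2 * k + 1) * x))) (csch x) := by
  have hr : exp (-(2 * x)) < 1 := exp_lt_one_iff.mpr (by linarith)
  have hterm : ∀ k : ℕ, 2 * exp (-((2 * k + 1) * x)) = 2 * exp (-x) * exp (-(2 * x)) ^ k := by
    intro k
    rw [← exp_nat_mul, mul_assoc, ← exp_add]
    ring_nf
  have hden : exp x - exp (-x) = exp x * (1 - exp (-(2 * x))) := by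
    rw [mul_sub, mul_one, ← exp_add]
    ring_nf
  have hcsch : csch x = 2 * exp (-x) * (1 - exp (-(2 * x)))⁻¹ := by
    have h1 : 0 < 1 - exp (-(2 * x)) := by linarith
    rw [csch, hden, exp_neg x]
    field_simp
  rw [hcsch]
  exact ((hasSum_geometric_of_lt_one (exp_pos _).le hr).mul_left _).congr_fun hterm

theorem hasSum_integral_rpow_mul_tsum_exp_neg {ι : Type*} [Countable ι] {c : ι → ℝ} {s : ℝ}
    (hs : 0 < s) (hc : ∀ i, 0 < c i) (hsum : Summable fun i => c i ^ (-s)) :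
    HasSum (fun i => Gamma s * c i ^ (-s))
      (∫ u in Ioi 0, ∑' i, u ^ (s - 1) * exp (-(c i * u))) := by
  have hval : ∀ i, ∫ u in Ioi 0, u ^ (s - 1) * exp (-(c i * u)) = Gamma s * c i ^ (-s) := by
    intro i
    rw [integral_rpow_mul_exp_neg_mul_Ioi hs (hc i), one_div, inv_rpow (hc i).le, rpow_neg (hc i).le,
      mul_comm]
  have hint : ∀ i, IntegrableOn (fun u => u ^ (s - 1) * exp (-(c i * u))) (Ioi 0) := fun i =>
    (integrableOn_rpow_mul_exp_neg_mul_rpow (s := s - 1) (by linarith) one_pos (hc i)).congr_fun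
      (fun u _ => by simp [rpow_one]) measurableSet_Ioi
  have hnorm : ∀ i, ∫ u in Ioi 0, ‖u ^ (s - 1) * exp (-(c i * u))‖ = Gamma s * c i ^ (-s) := by
    intro i
    rw [← hval i]
    refine setIntegral_congr_fun measurableSet_Ioi fun u (hu : 0 < u) => ?_
    exact Real.norm_of_nonneg (by positivity)
  simpa only [hval] using
    hasSum_integral_of_summable_integral_norm hint (by simpa only [hnorm] using hsum.mul_left _)

theorem summable_nat_add_rpow_neg {a s : ℝ} (ha : 0 < a) (hs : 1 < s) :
    Summable fun k : ℕ => ((k : ℝ) + a) ^ (-s) := by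
  refine ((summable_one_div_nat_add_rpow a s).mpr hs).congr fun k => ?_
  have hka : 0 < (k : ℝ) + a := by positivity
  rw [abs_of_pos hka, rpow_neg hka.le, one_div]

theorem hurwitzZetaReal_pos {s a : ℝ} (hs : 1 < s) (ha : 0 < a) : 0 < hurwitzZetaReal s a :=
  (summable_nat_add_rpow_neg ha hs).tsum_pos (fun k => by positivity) 0 (by positivity)

theorem integral_csch_div_exp_mul_rpow {α ρ s : ℝ} (hρ : 0 < ρ) (hαρ : 0 < α + ρ) (hs : 1 < s) :
    ∫ u in Ioi 0, csch (ρ * u) / exp (α * u) * u ^ (s - 1) =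
      2 * Gamma s / (2 * ρ) ^ s * hurwitzZetaReal s ((α + ρ) / (2 * ρ)) := by
  set a := (α + ρ) / (2 * ρ)
  have ha : 0 < a := by positivity
  set c : ℕ → ℝ := fun k => 2 * ρ * (k + a)
  have hc : ∀ k, 0 < c k := fun k => by positivity
  have hcpow : ∀ k : ℕ, c k ^ (-s) = (2 * ρ) ^ (-s) * ((k : ℝ) + a) ^ (-s) := fun k =>
    mul_rpow (by positivity) (by positivity)
  have hsum : Summable fun k => c k ^ (-s) := by
    simpa only [hcpow] using (summable_nat_add_rpow_neg ha hs).mul_left ((2 * ρ) ^ (-s))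
  have hpt : ∀ u ∈ Ioi (0 : ℝ), csch (ρ * u) / exp (α * u) * u ^ (s - 1) =
      2 * ∑' k, u ^ (s - 1) * exp (-(c k * u)) := by
    intro u (hu : 0 < u)
    rw [← tsum_mul_left]
    refine ((((hasSum_csch (mul_pos hρ hu)).div_const (exp (α * u))).mul_right
      (u ^ (s - 1))).congr_fun fun k => ?_).tsum_eq.symm
    have hck : c k * u = α * u + (2 * k + 1) * (ρ * u) := by
      simp only [c, a]
      field_simp
      ring
    rw [hck, neg_add, exp_add, exp_neg (α * u)]
    ring
  rw [setIntegral_congr_fun measurableSet_Ioi hpt, integral_const_mul,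
    ← (hasSum_integral_rpow_mul_tsum_exp_neg (by linarith) hc hsum).tsum_eq]
  simp only [hcpow, hurwitzZetaReal, tsum_mul_left, rpow_neg (by positivity : (0 : ℝ) ≤ 2 * ρ)]
  ring

theorem stmt2_general (α ρ γ σ : ℝ) (hρ : ρ > max 0 (-α)) (hγ : 0 < γ) (hγσ : γ < σ) :
    (∫ t in Set.Ioi (0 : ℝ), csch (ρ * t ^ γ) / Real.exp (α * t ^ γ) * t ^ (σ - 1)) =
      2 * Real.Gamma (σ / γ) / (γ * (2 * ρ) ^ (σ / γ)) *
        hurwitzZetaReal (σ / γ) ((α + ρ) / (2 * ρ)) ∧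
    0 < 2 * Real.Gamma (σ / γ) / (γ * (2 * ρ) ^ (σ / γ)) *
        hurwitzZetaReal (σ / γ) ((α + ρ) / (2 * ρ)) := by
  obtain ⟨hρ, hαρ⟩ : 0 < ρ ∧ 0 < α + ρ := by
    rw [gt_iff_lt, max_lt_iff] at hρ
    exact ⟨hρ.1, by linarith [hρ.2]⟩
  have hs : 1 < σ / γ := (one_lt_div hγ).mpr hγσ
  refine ⟨?_, ?_⟩
  · rw [integral_comp_rpow_mul_rpow_sub_one (fun u => csch (ρ * u) / exp (α * u)) hγ,
      integral_csch_div_exp_mul_rpow hρ hαρ hs]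
    field_simp
  · have := Gamma_pos_of_pos (by linarith : 0 < σ / γ)
    have := hurwitzZetaReal_pos hs (by positivity : 0 < (α + ρ) / (2 * ρ))
    positivity

theorem stmt2 (α ρ γ σ : ℝ) (hρ : ρ > max 0 (-α)) (hγ : 0 < γ) (hγσ : γ < σ) (hσ : σ ≤ 1) :
    (∫ t in Set.Ioi (0 : ℝ), csch (ρ * t ^ γ) / Real.exp (α * t ^ γ) * t ^ (σ - 1)) =
      2 * Real.Gamma (σ / γ) / (γ * (2 * ρ) ^ (σ / γ)) *
        hurwitzZetaReal (σ / γ) ((α + ρ) / (2 * ρ)) ∧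
    0 < 2 * Real.Gamma (σ / γ) / (γ * (2 * ρ) ^ (σ / γ)) *
        hurwitzZetaReal (σ / γ) ((α + ρ) / (2 * ρ)) :=
  stmt2_general α ρ γ σ hρ hγ hγσ
end

section
/- Let $\rho > \max\{0,-\alpha\}$, $0 < \gamma < \sigma \le 1$, let $(\nu_n)$ be a positive decreasing sequence with partial sums $V_n$, let $\beta \le \nu_1/2$, let $U : (0,\infty) \to (0,\infty)$ be given by $U(x) = \int_0^x \mu(t)\,dt$ for a positive continuous $\mu$ with $U(x) < \infty$, and let $\delta \in \{-1,1\}$. Then for every $x > 0$, the weight coefficient $\omega_{\delta}(\sigma, x) = \sum_{n=1}^{\infty} \frac{\operatorname{csch}(\rho U^{\delta\gamma}(x)(V_n-\beta)^{\gamma})}{e^{\alpha U^{\delta\gamma}(x)(V_n-\beta)^{\gamma}}} \cdot \frac{U^{\delta\sigma}(x)\,\nu_{n+1}}{(V_n-\beta)^{1-\sigma}}$ satisfies $\omega_{\delta}(\sigma,x) < k(\sigma)$, where $k(\sigma) = \int_0^{\infty} \frac{\operatorname{csch}(\rho u^{\gamma})}{e^{\alpha u^{\gamma}}} u^{\sigma-1}\,du$.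 -/
open Real MeasureTheory Set

/-!
With `c = U(x)^δ`, `t_n = V_{n+1} - β` and `w_n = ν_{n+2}`, the `n`-th summand is
`K(c t_n) · c w_n` for the integrand `K(u) = csch(ρ u^γ) e^{-α u^γ} u^{σ-1}` of `k(σ)`.
So the series is a midpoint sum of `K` over the intervals `c [t_n - w_n/2, t_n + w_n/2]`,
which lie in `(0, ∞)` because `β ≤ ν_1/2` and do not overlap because `ν` decreases.
`K` is strictly convex: `csch(ρ s) e^{-α s} = 2 / (e^{(ρ+α)s} - e^{(α-ρ)s})` is convex and
decreasing, `u^γ` is strictly concave and `u^{σ-1}` is convex and decreasing. By the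
Hermite–Hadamard inequality each summand is strictly less than the integral of `K` over its
interval.
-/

theorem StrictConvexOn.mul_sub_lt_intervalIntegral {s : Set ℝ} {f : ℝ → ℝ}
    (hf : StrictConvexOn ℝ s f) {l r : ℝ} (hlr : l < r) (hs : Ioo l r ⊆ s)
    (hfi : IntervalIntegrable f volume l r) :
    f ((l + r) / 2) * (r - l) < ∫ u in l..r, f u := by
  obtain ⟨m, hm⟩ : ∃ m, m = (l + r) / 2 := ⟨_, rfl⟩
  rw [← hm]
  have hlm : l < m := by linarith
  have hmr : m < r := by linarith
  have hfi_l : IntervalIntegrable f volume l m :=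
    hfi.mono_set (uIcc_subset_uIcc_left (by rw [uIcc_of_le hlr.le]; exact ⟨hlm.le, hmr.le⟩))
  have hfi_r : IntervalIntegrable f volume m r :=
    hfi.mono_set (uIcc_subset_uIcc_right (by rw [uIcc_of_le hlr.le]; exact ⟨hlm.le, hmr.le⟩))
  -- reflecting `[m, r]` onto `[l, m]` pairs each `u` with `l + r - u`; their midpoint is `m`
  have hreflect_i : IntervalIntegrable (fun u => f (l + r - u)) volume l m := by
    convert (hfi_r.comp_sub_left (l + r)).symm using 1 <;> linarith
  have hreflect : ∫ u in l..m, f (l + r - u) = ∫ u in m..r, f u := by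
    rw [intervalIntegral.integral_comp_sub_left]; congr 1 <;> linarith
  have hpos : 0 < ∫ u in l..m, (f u + f (l + r - u) - 2 * f m) := by
    refine intervalIntegral.intervalIntegral_pos_of_pos_on
      ((hfi_l.add hreflect_i).sub intervalIntegrable_const) (fun u hu => ?_) hlm
    have hmid := hf.2 (hs ⟨hu.1, hu.2.trans hmr⟩)
      (hs (show l + r - u ∈ Ioo l r from ⟨by linarith [hu.2], by linarith [hu.1]⟩))
      (by linarith [hu.2]) one_half_pos one_half_pos (add_halves 1)
    rw [smul_eq_mul, smul_eq_mul, smul_eq_mul, smul_eq_mul,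
      show 1 / 2 * u + 1 / 2 * (l + r - u) = m by linarith] at hmid
    linarith
  rw [intervalIntegral.integral_sub (hfi_l.add hreflect_i) intervalIntegrable_const,
    intervalIntegral.integral_add hfi_l hreflect_i, hreflect, intervalIntegral.integral_const,
    intervalIntegral.integral_add_adjacent_intervals hfi_l hfi_r, smul_eq_mul] at hpos
  have hwidth : (m - l) * (2 * f m) = f m * (r - l) := by rw [hm]; ring
  linarith

theorem tsum_mul_lt_integral_Ioi_of_strictConvexOn {f : ℝ → ℝ} {a : ℝ} {t w : ℕ → ℝ}
    (hf : StrictConvexOn ℝ (Ioi a) f) (hf₀ : ∀ u ∈ Ioi a, 0 ≤ f u)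
    (hfi : IntegrableOn f (Ioi a)) (hw : ∀ n, 0 < w n) (ht₀ : a ≤ t 0 - w 0 / 2)
    (ht : ∀ n, t n + w n / 2 ≤ t (n + 1) - w (n + 1) / 2) :
    ∑' n, f (t n) * w n < ∫ u in Ioi a, f u := by
  set l : ℕ → ℝ := fun n => t n - w n / 2 with hl_def
  set r : ℕ → ℝ := fun n => t n + w n / 2 with hr_def
  have hlr (n : ℕ) : l n < r n := by simp only [hl_def, hr_def]; linarith [hw n]
  have hl : Monotone l := monotone_nat_of_le_succ fun n => (hlr n).le.trans (ht n)
  have hdisj : Pairwise (Function.onFun Disjoint fun n => Ioc (l n) (r n)) :=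
    hl.pairwise_disjoint_on_Ioc_succ.mono fun i j h =>
      h.mono (Ioc_subset_Ioc_right (ht i)) (Ioc_subset_Ioc_right (ht j))
  have hsub : ⋃ n, Ioc (l n) (r n) ⊆ Ioi a :=
    iUnion_subset fun n u hu => ht₀.trans_lt ((hl (Nat.zero_le n)).trans_lt hu.1)
  have hsum := hasSum_integral_iUnion (fun n => measurableSet_Ioc) hdisj (hfi.mono_set hsub)
  have hmid (n : ℕ) : (l n + r n) / 2 = t n := by simp only [hl_def, hr_def]; ring
  have hwidth (n : ℕ) : r n - l n = w n := by simp only [hl_def, hr_def]; ring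
  have ht_mem (n : ℕ) : t n ∈ Ioi a :=
    hsub (mem_iUnion.2 ⟨n, by rw [← hmid]; constructor <;> linarith [hlr n]⟩)
  have hlt (n : ℕ) : f (t n) * w n < ∫ u in Ioc (l n) (r n), f u := by
    rw [← intervalIntegral.integral_of_le (hlr n).le]
    have := hf.mul_sub_lt_intervalIntegral (hlr n)
      (Ioo_subset_Ioc_self.trans ((subset_iUnion _ n).trans hsub))
      ((intervalIntegrable_iff_integrableOn_Ioc_of_le (hlr n).le).2
        (hfi.mono_set ((subset_iUnion _ n).trans hsub)))
    rwa [hmid, hwidth] at this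
  calc ∑' n, f (t n) * w n
      < ∑' n, ∫ u in Ioc (l n) (r n), f u :=
        Summable.tsum_lt_tsum_of_nonneg
          (fun n => mul_nonneg (hf₀ _ (ht_mem n)) (hw n).le)
          (fun n => (hlt n).le) (hlt 0) hsum.summable
    _ = ∫ u in ⋃ n, Ioc (l n) (r n), f u := hsum.tsum_eq
    _ ≤ ∫ u in Ioi a, f u :=
        setIntegral_mono_set hfi ((ae_restrict_iff' measurableSet_Ioi).2 (ae_of_all _ hf₀))
          hsub.eventuallyLE

lemma image_rpow_Ioi_zero {γ : ℝ} (hγ : γ ≠ 0) :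
    (fun u : ℝ => u ^ γ) '' Ioi 0 = Ioi 0 := by
  refine Subset.antisymm (image_subset_iff.2 fun u hu => rpow_pos_of_pos hu γ) fun y hy => ?_
  exact ⟨y ^ γ⁻¹, rpow_pos_of_pos hy _, rpow_inv_rpow (le_of_lt hy) hγ⟩

lemma convexOn_rpow_of_nonpos {p : ℝ} (hp : p ≤ 0) :
    ConvexOn ℝ (Ioi 0) fun x : ℝ => x ^ p := by
  refine convexOn_of_hasDerivWithinAt2_nonneg (convex_Ioi 0)
    (f' := fun x => p * x ^ (p - 1)) (f'' := fun x => p * ((p - 1) * x ^ (p - 1 - 1)))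
    (fun x hx => (continuousAt_rpow_const x p (Or.inl (ne_of_gt hx))).continuousWithinAt)
    (fun x hx => ?_) (fun x hx => ?_) (fun x hx => ?_) <;> rw [interior_Ioi] at hx
  · exact (hasDerivAt_rpow_const (Or.inl (ne_of_gt hx))).hasDerivWithinAt
  · exact ((hasDerivAt_rpow_const (Or.inl (ne_of_gt hx))).const_mul p).hasDerivWithinAt
  · have := rpow_pos_of_pos hx (p - 1 - 1)
    exact mul_nonneg_of_nonpos_of_nonpos hp (mul_nonpos_of_nonpos_of_nonneg (by linarith) this.le)

lemma StrictConvexOn.mul_convexOn {s : Set ℝ} {f g : ℝ → ℝ} (hf : StrictConvexOn ℝ s f)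
    (hg : ConvexOn ℝ s g) (hf₀ : ∀ x ∈ s, 0 ≤ f x) (hg₀ : ∀ x ∈ s, 0 < g x)
    (hfg : MonovaryOn f g s) : StrictConvexOn ℝ s fun x => f x * g x := by
  refine ⟨hf.1, fun x hx y hy hxy a b ha hb hab => ?_⟩
  have hfm := hf.2 hx hy hxy ha hb hab
  have hgm := hg.2 hx hy ha.le hb.le hab
  simp only [smul_eq_mul] at hfm hgm ⊢
  have hfx := hf₀ x hx
  have hfy := hf₀ y hy
  -- Chebyshev: `(a f x + b f y)(a g x + b g y) ≤ a f x g x + b f y g y` for monovarying `f`, `g`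
  have hcheb := hfg.sub_mul_sub_nonneg hx hy
  calc f (a * x + b * y) * g (a * x + b * y)
      < (a * f x + b * f y) * g (a * x + b * y) :=
        mul_lt_mul_of_pos_right hfm (hg₀ _ (hf.1 hx hy ha.le hb.le hab))
    _ ≤ (a * f x + b * f y) * (a * g x + b * g y) := by gcongr
    _ ≤ a * (f x * g x) + b * (f y * g y) := by
        obtain rfl : b = 1 - a := by linarith
        nlinarith [mul_nonneg (mul_pos ha hb).le hcheb]

lemma hasDerivAt_exp_const_mul (c s : ℝ) :
    HasDerivAt (fun s => exp (c * s)) (c * exp (c * s)) s := by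
  simpa [mul_comm] using ((hasDerivAt_id s).const_mul c).exp

section ExpDifference

variable {a b s : ℝ}

lemma exp_mul_sub_exp_mul_pos (hba : b < a) (hs : 0 < s) : 0 < exp (a * s) - exp (b * s) :=
  sub_pos.2 (exp_lt_exp.2 (by nlinarith))

lemma hasDerivAt_exp_mul_sub_exp_mul (a b s : ℝ) :
    HasDerivAt (fun s => exp (a * s) - exp (b * s)) (a * exp (a * s) - b * exp (b * s)) s :=
  (hasDerivAt_exp_const_mul a s).sub (hasDerivAt_exp_const_mul b s)

lemma hasDerivAt_two_div_exp_mul_sub_exp_mul (hba : b < a) (hs : 0 < s) :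
    HasDerivAt (fun s => 2 / (exp (a * s) - exp (b * s)))
      (-2 * (a * exp (a * s) - b * exp (b * s)) / (exp (a * s) - exp (b * s)) ^ 2) s :=
  ((hasDerivAt_const s (2 : ℝ)).div (hasDerivAt_exp_mul_sub_exp_mul a b s)
    (exp_mul_sub_exp_mul_pos hba hs).ne').congr_deriv (by ring)

lemma continuousOn_two_div_exp_mul_sub_exp_mul (hba : b < a) :
    ContinuousOn (fun s => 2 / (exp (a * s) - exp (b * s))) (Ioi 0) := fun _ hs =>
  (hasDerivAt_two_div_exp_mul_sub_exp_mul hba hs).continuousAt.continuousWithinAt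

lemma convexOn_two_div_exp_mul_sub_exp_mul (hba : b < a) :
    ConvexOn ℝ (Ioi 0) fun s => 2 / (exp (a * s) - exp (b * s)) := by
  have hD' (s : ℝ) : HasDerivAt (fun s => a * exp (a * s) - b * exp (b * s))
      (a ^ 2 * exp (a * s) - b ^ 2 * exp (b * s)) s :=
    (((hasDerivAt_exp_const_mul a s).const_mul a).sub
      ((hasDerivAt_exp_const_mul b s).const_mul b)).congr_deriv (by ring)
  refine convexOn_of_hasDerivWithinAt2_nonneg (convex_Ioi 0)
    (f' := fun s => -2 * (a * exp (a * s) - b * exp (b * s)) / (exp (a * s) - exp (b * s)) ^ 2)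
    (f'' := fun s => 2 * (2 * (a * exp (a * s) - b * exp (b * s)) ^ 2 -
      (exp (a * s) - exp (b * s)) * (a ^ 2 * exp (a * s) - b ^ 2 * exp (b * s))) /
        (exp (a * s) - exp (b * s)) ^ 3)
    (continuousOn_two_div_exp_mul_sub_exp_mul hba) (fun s hs => ?_) (fun s hs => ?_)
    (fun s hs => ?_) <;> rw [interior_Ioi] at hs
  · exact (hasDerivAt_two_div_exp_mul_sub_exp_mul hba hs).hasDerivWithinAt
  · have hD := (exp_mul_sub_exp_mul_pos hba hs).ne'
    have hsq : HasDerivAt (fun s => (exp (a * s) - exp (b * s)) ^ 2)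
        (2 * (exp (a * s) - exp (b * s)) * (a * exp (a * s) - b * exp (b * s))) s :=
      ((hasDerivAt_exp_mul_sub_exp_mul a b s).pow 2).congr_deriv (by ring)
    exact ((((hD' s).const_mul (-2)).div hsq (pow_ne_zero 2 hD)).congr_deriv
      (by field_simp; ring)).hasDerivWithinAt
  · have hD := exp_mul_sub_exp_mul_pos hba hs
    have hXY := mul_pos (exp_pos (a * s)) (exp_pos (b * s))
    set X := exp (a * s)
    set Y := exp (b * s)
    -- for `D = X - Y` one has `2 D'^2 - D D'' = (a X - b Y)^2 + (a - b)^2 X Y`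
    have key : 0 ≤ 2 * (a * X - b * Y) ^ 2 - (X - Y) * (a ^ 2 * X - b ^ 2 * Y) := by
      nlinarith [sq_nonneg (a * X - b * Y), mul_nonneg hXY.le (sq_nonneg (a - b))]
    exact div_nonneg (mul_nonneg zero_le_two key) (pow_nonneg hD.le 3)

lemma strictAntiOn_two_div_exp_mul_sub_exp_mul (ha : 0 ≤ a) (hba : b < a) :
    StrictAntiOn (fun s => 2 / (exp (a * s) - exp (b * s))) (Ioi 0) := by
  refine strictAntiOn_of_hasDerivWithinAt_neg (convex_Ioi 0)
    (f' := fun s => -2 * (a * exp (a * s) - b * exp (b * s)) / (exp (a * s) - exp (b * s)) ^ 2)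
    (continuousOn_two_div_exp_mul_sub_exp_mul hba) (fun s hs => ?_) (fun s hs => ?_) <;>
    rw [interior_Ioi] at hs
  · exact (hasDerivAt_two_div_exp_mul_sub_exp_mul hba hs).hasDerivWithinAt
  · have hD := exp_mul_sub_exp_mul_pos hba hs
    have hD' : 0 < a * exp (a * s) - b * exp (b * s) := by
      nlinarith [exp_pos (b * s)]
    exact div_neg_of_neg_of_pos (by linarith) (by positivity)

lemma two_div_exp_mul_sub_exp_mul_le (hba : b < a) (hs : 0 < s) :
    2 / (exp (a * s) - exp (b * s)) ≤ 2 * exp (-a * s) * (1 + 1 / ((a - b) * s)) := by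
  have ht : 0 < (a - b) * s := mul_pos (sub_pos.2 hba) hs
  -- `exp (-t) ≤ 1 / (1 + t)` gives `exp (a s) - exp (b s) ≥ exp (a s) * t / (1 + t)`
  have hexp : exp (b * s) * (1 + (a - b) * s) ≤ exp (a * s) := by
    have := add_one_le_exp ((a - b) * s)
    calc exp (b * s) * (1 + (a - b) * s) ≤ exp (b * s) * exp ((a - b) * s) := by gcongr; linarith
      _ = exp (a * s) := by rw [← exp_add]; ring_nf
  have hD : exp (a * s) * ((a - b) * s) / (1 + (a - b) * s) ≤ exp (a * s) - exp (b * s) := by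
    rw [div_le_iff₀ (by positivity)]
    nlinarith
  calc 2 / (exp (a * s) - exp (b * s))
      ≤ 2 / (exp (a * s) * ((a - b) * s) / (1 + (a - b) * s)) :=
        div_le_div_of_nonneg_left zero_le_two (by positivity) hD
    _ = 2 * exp (-a * s) * (1 + 1 / ((a - b) * s)) := by
        have : a - b ≠ 0 := (sub_pos.2 hba).ne'
        rw [neg_mul, exp_neg]
        field_simp
        ring

end ExpDifference

/-- The integrand of `k(σ)`. -/
noncomputable def cschKernel (α ρ γ σ u : ℝ) : ℝ :=
  csch (ρ * u ^ γ) / exp (α * u ^ γ) * u ^ (σ - 1)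

lemma csch_mul_div_exp (α ρ s : ℝ) :
    csch (ρ * s) / exp (α * s) = 2 / (exp ((ρ + α) * s) - exp ((α - ρ) * s)) := by
  rw [csch, div_div, sub_mul, ← exp_add, ← exp_add]
  ring_nf

section cschKernel

variable {α ρ γ σ : ℝ}

lemma cschKernel_eq (u : ℝ) : cschKernel α ρ γ σ u =
    2 / (exp ((ρ + α) * u ^ γ) - exp ((α - ρ) * u ^ γ)) * u ^ (σ - 1) := by
  rw [cschKernel, csch_mul_div_exp]

lemma cschKernel_pos (hρ : 0 < ρ) {u : ℝ} (hu : 0 < u) : 0 < cschKernel α ρ γ σ u := by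
  rw [cschKernel_eq]
  have := exp_mul_sub_exp_mul_pos (show α - ρ < ρ + α by linarith) (rpow_pos_of_pos hu γ)
  positivity

lemma strictConvexOn_cschKernel (hρ : 0 < ρ) (hαρ : 0 < ρ + α) (hγ : 0 < γ) (hγ1 : γ < 1)
    (hσ : σ ≤ 1) : StrictConvexOn ℝ (Ioi 0) (cschKernel α ρ γ σ) := by
  have hba : α - ρ < ρ + α := by linarith
  have himage := image_rpow_Ioi_zero hγ.ne'
  set Φ := fun s => 2 / (exp ((ρ + α) * s) - exp ((α - ρ) * s))
  have hanti : StrictAntiOn Φ (Ioi 0) := strictAntiOn_two_div_exp_mul_sub_exp_mul hαρ.le hba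
  have hcomp : StrictConvexOn ℝ (Ioi 0) (Φ ∘ fun u => u ^ γ) :=
    ConvexOn.comp_strictConcaveOn (by rw [himage]; exact convexOn_two_div_exp_mul_sub_exp_mul hba)
      ((strictConcaveOn_rpow hγ hγ1).subset Ioi_subset_Ici_self (convex_Ioi 0))
      (by rw [himage]; exact hanti)
  have hcomp_anti : AntitoneOn (Φ ∘ fun u => u ^ γ) (Ioi 0) :=
    (hanti.comp_strictMonoOn ((strictMonoOn_rpow_Ici_of_exponent_pos hγ).mono Ioi_subset_Ici_self)
      fun u hu => rpow_pos_of_pos hu γ).antitoneOn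
  have hσ' : σ - 1 ≤ 0 := by linarith
  convert hcomp.mul_convexOn (convexOn_rpow_of_nonpos hσ')
    (fun u hu => (div_pos two_pos (exp_mul_sub_exp_mul_pos hba (rpow_pos_of_pos hu γ))).le)
    (fun u hu => rpow_pos_of_pos hu _)
    (hcomp_anti.monovaryOn (antitoneOn_rpow_Ioi_of_exponent_nonpos hσ')) using 1
  exact funext cschKernel_eq

lemma integrableOn_cschKernel (hρ : 0 < ρ) (hαρ : 0 < ρ + α) (hγ : 0 < γ)
    (hγσ : γ < σ) :
    IntegrableOn (cschKernel α ρ γ σ) (Ioi 0) := by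
  have hba : α - ρ < ρ + α := by linarith
  have hcont : ContinuousOn (cschKernel α ρ γ σ) (Ioi 0) := by
    rw [show cschKernel α ρ γ σ = _ from funext cschKernel_eq]
    exact ((continuousOn_two_div_exp_mul_sub_exp_mul hba).comp
      (continuousOn_id.rpow_const fun u hu => Or.inl (ne_of_gt hu))
      fun u hu => rpow_pos_of_pos hu γ).mul
      (continuousOn_id.rpow_const fun u hu => Or.inl (ne_of_gt hu))
  -- `csch (ρ s) e^{-α s} ≤ 2 e^{-(ρ+α) s} (1 + 1 / (2 ρ s))`; integrable at `0` as `σ > γ`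
  have hdom : IntegrableOn (fun u => 2 * (u ^ (σ - 1) * exp (-(ρ + α) * u ^ γ)) +
      1 / ρ * (u ^ (σ - 1 - γ) * exp (-(ρ + α) * u ^ γ))) (Ioi 0) :=
    ((integrableOn_rpow_mul_exp_neg_mul_rpow (by linarith) hγ hαρ).const_mul 2).add
      ((integrableOn_rpow_mul_exp_neg_mul_rpow (by linarith) hγ hαρ).const_mul (1 / ρ))
  refine hdom.mono' (hcont.aestronglyMeasurable measurableSet_Ioi)
    ((ae_restrict_iff' measurableSet_Ioi).2 (ae_of_all _ fun u (hu : 0 < u) => ?_))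
  have hs := rpow_pos_of_pos hu γ
  rw [norm_of_nonneg (cschKernel_pos hρ hu).le, cschKernel_eq]
  calc 2 / (exp ((ρ + α) * u ^ γ) - exp ((α - ρ) * u ^ γ)) * u ^ (σ - 1)
      ≤ 2 * exp (-(ρ + α) * u ^ γ) * (1 + 1 / ((ρ + α - (α - ρ)) * u ^ γ)) *
          u ^ (σ - 1) := by
        gcongr
        exact two_div_exp_mul_sub_exp_mul_le hba hs
    _ = _ := by
        have := hρ.ne'
        rw [rpow_sub hu (σ - 1) γ, show ρ + α - (α - ρ) = 2 * ρ by ring]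
        field_simp

lemma cschKernel_rpow_mul_mul {y T : ℝ} (hy : 0 < y) (hT : 0 < T) (δ w : ℝ) :
    cschKernel α ρ γ σ (y ^ δ * T) * (y ^ δ * w) =
      csch (ρ * y ^ (δ * γ) * T ^ γ) / exp (α * y ^ (δ * γ) * T ^ γ) *
        (y ^ (δ * σ) * w / T ^ (1 - σ)) := by
  have hyδ := rpow_pos_of_pos hy δ
  have hγ : (y ^ δ * T) ^ γ = y ^ (δ * γ) * T ^ γ := by
    rw [mul_rpow hyδ.le hT.le, ← rpow_mul hy.le]
  have hσ : (y ^ δ * T) ^ (σ - 1) * (y ^ δ * w) = y ^ (δ * σ) * w / T ^ (1 - σ) := by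
    rw [mul_rpow hyδ.le hT.le, ← rpow_mul hy.le, show σ - 1 = -(1 - σ) by ring, rpow_neg hT.le,
      show δ * σ = δ * -(1 - σ) + δ by ring, rpow_add hy]
    ring
  rw [cschKernel, hγ, ← hσ]
  simp only [mul_assoc]

end cschKernel

theorem stmt10_general (α ρ γ σ β δ : ℝ)
    (hρ : ρ > max 0 (-α)) (hγ : 0 < γ) (hγσ : γ < σ) (hσ : σ ≤ 1)
    (ν : ℕ → ℝ) (hν : ∀ n ≥ 1, 0 < ν n)
    (hdec : ∀ m n, 1 ≤ m → m ≤ n → ν n ≤ ν m)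
    (V : ℕ → ℝ) (hV : ∀ n, V n = ∑ j ∈ Finset.Icc 1 n, ν j)
    (hβ : β ≤ ν 1 / 2)
    (μ : ℝ → ℝ) (hμ : ∀ t > 0, 0 < μ t)
    (hμint : ∀ x > 0, MeasureTheory.IntegrableOn μ (Set.Ioc 0 x))
    (U : ℝ → ℝ) (hU : ∀ x, U x = ∫ t in Set.Ioc (0 : ℝ) x, μ t)
    (x : ℝ) (hx : 0 < x) :
    (∑' n : ℕ,
        csch (ρ * U x ^ (δ * γ) * (V (n + 1) - β) ^ γ) /
            Real.exp (α * U x ^ (δ * γ) * (V (n + 1) - β) ^ γ) *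
          (U x ^ (δ * σ) * ν (n + 2) / (V (n + 1) - β) ^ (1 - σ))) <
      ∫ u in Set.Ioi (0 : ℝ), csch (ρ * u ^ γ) / Real.exp (α * u ^ γ) * u ^ (σ - 1) := by
  obtain ⟨hρ₀, hαρ⟩ : 0 < ρ ∧ 0 < ρ + α := by
    rw [gt_iff_lt, max_lt_iff] at hρ; constructor <;> linarith
  have hUx : 0 < U x := by
    rw [hU, ← intervalIntegral.integral_of_le hx.le]
    exact intervalIntegral.intervalIntegral_pos_of_pos_on
      ((intervalIntegrable_iff_integrableOn_Ioc_of_le hx.le).2 (hμint x hx))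
      (fun t ht => hμ t ht.1) hx
  have hc := rpow_pos_of_pos hUx δ
  have hVsucc (n : ℕ) : V (n + 2) = V (n + 1) + ν (n + 2) := by
    rw [hV, hV, Finset.sum_Icc_succ_top (by omega)]
  have hV_ge (n : ℕ) : ν 1 ≤ V (n + 1) := by
    induction n with
    | zero => simp [hV]
    | succ n ih => rw [hVsucc]; linarith [hν (n + 2) (by omega)]
  have hν1 := hν 1 le_rfl
  have hν2 := hdec 1 2 le_rfl one_le_two
  rw [tsum_congr fun n => (cschKernel_rpow_mul_mul hUx (by linarith [hV_ge n]) δ _).symm]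
  refine tsum_mul_lt_integral_Ioi_of_strictConvexOn
    (strictConvexOn_cschKernel hρ₀ hαρ hγ (hγσ.trans_le hσ) hσ)
    (fun u hu => (cschKernel_pos hρ₀ hu).le) (integrableOn_cschKernel hρ₀ hαρ hγ hγσ)
    (fun n => mul_pos hc (hν _ (by omega))) ?_ fun n => ?_
  · have := hV_ge 0
    nlinarith
  · rw [hVsucc]
    nlinarith [hdec (n + 2) (n + 3) (by omega) (by omega)]

theorem stmt10 (α ρ γ σ β δ : ℝ)
    (hρ : ρ > max 0 (-α)) (hγ : 0 < γ) (hγσ : γ < σ) (hσ : σ ≤ 1)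
    (hδ : δ = 1 ∨ δ = -1)
    (ν : ℕ → ℝ) (hν : ∀ n ≥ 1, 0 < ν n)
    (hdec : ∀ m n, 1 ≤ m → m ≤ n → ν n ≤ ν m)
    (V : ℕ → ℝ) (hV : ∀ n, V n = ∑ j ∈ Finset.Icc 1 n, ν j)
    (hβ : β ≤ ν 1 / 2)
    (μ : ℝ → ℝ) (hμ : ∀ t > 0, 0 < μ t) (hμc : ContinuousOn μ (Set.Ioi 0))
    (hμint : ∀ x > 0, MeasureTheory.IntegrableOn μ (Set.Ioc 0 x))
    (U : ℝ → ℝ) (hU : ∀ x, U x = ∫ t in Set.Ioc (0 : ℝ) x, μ t)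
    (x : ℝ) (hx : 0 < x) :
    (∑' n : ℕ,
        csch (ρ * U x ^ (δ * γ) * (V (n + 1) - β) ^ γ) /
            Real.exp (α * U x ^ (δ * γ) * (V (n + 1) - β) ^ γ) *
          (U x ^ (δ * σ) * ν (n + 2) / (V (n + 1) - β) ^ (1 - σ))) <
      ∫ u in Set.Ioi (0 : ℝ), csch (ρ * u ^ γ) / Real.exp (α * u ^ γ) * u ^ (σ - 1) :=
  stmt10_general α ρ γ σ β δ hρ hγ hγσ hσ ν hν hdec V hV hβ μ hμ hμint U hU x hx
end
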